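/- arXiv:2509.00436 — 3 statements merged into one kernel-verified Lean document; each statement's English description precedes it below -/
import Mathlib

section
/- As formal power series in x with coefficients in ℤ[q,t], q·B(x;q) − t·B(x;t) = (q − t)·B(x;q)·B(x;t). -/
open scoped Classical
open Finset

noncomputable section

/-- The set of positive nondecreasing sequences of length `n` bounded above by `b` is finite. -/
lemma boundedSeq_finite (n : ℕ) (b : ℕ → ℕ) :
    {p : Fin n → ℕ | Monotone p ∧ ∀ i : Fin n, 1 ≤ p i ∧ p i ≤ b i}.Finite := by
  have h : {p : Fin n → ℕ | Monotone p ∧ ∀ i : Fin n, 1 ≤ p i ∧ p i ≤ b i} ⊆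
      Set.pi Set.univ (fun i : Fin n => Set.Iic (b i)) := by
    intro p hp
    rw [Set.mem_pi]
    intro i _
    exact (hp.2 i).2
  exact (Set.Finite.pi fun i : Fin n => Set.finite_Iic (b (i : ℕ))).subset h

/-- The finset of nondecreasing sequences `p : Fin n → ℕ` of positive integers
with `p i ≤ b i` for all `i`. -/
def BSeq (n : ℕ) (b : ℕ → ℕ) : Finset (Fin n → ℕ) := (boundedSeq_finite n b).toFinset

/-- `PK m n` : the u-parking distributions of length `n`, i.e. nondecreasing sequences
of positive integers with `p i ≤ m*(i-1)+1` (here indexed from `0`, so `p i ≤ m*i+1`). -/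
def PK (m n : ℕ) : Finset (Fin n → ℕ) := BSeq n (fun i => m * i + 1)

/-- `luck p` : the number of indices `i` with `p i = m*(i-1)+1` (0-indexed: `m*i+1`). -/
def luck (m : ℕ) {n : ℕ} (p : Fin n → ℕ) : ℕ :=
  (Finset.univ.filter (fun i : Fin n => p i = m * (i : ℕ) + 1)).card

/-- `freq j p` = `ω_j(p)` : the number of indices `i` with `p i = j`. -/
def freq (j : ℕ) {n : ℕ} (p : Fin n → ℕ) : ℕ :=
  (Finset.univ.filter (fun i : Fin n => p i = j)).card

/-- `hcnt m n k r` = `h_{n,k,r}` : the number of nondecreasing sequences of positive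
integers with `p_i ≤ m*(i+k-1) - r` for `1 ≤ i ≤ n` (0-indexed: `p i ≤ m*(i+k) - r`). -/
def hcnt (m n k r : ℕ) : ℕ := (BSeq n (fun i => m * (i + k) - r)).card

/-- `Cnt m n k` = `C_{n,k}` : the number of `p ∈ PK m n` with `luck p = k`. -/
def Cnt (m n k : ℕ) : ℕ := ((PK m n).filter (fun p => luck m p = k)).card

/-- `Rpoly m n` = `R_n(q) = Σ_k C_{n,k} q^k ∈ ℤ[q]`. -/
def Rpoly (m n : ℕ) : Polynomial ℤ :=
  ∑ k ∈ Finset.range (n + 1), (Cnt m n k : Polynomial ℤ) * Polynomial.X ^ k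

/-- `hfull t k` : the complete homogeneous symmetric polynomial of degree `k`
in variables `q_0, …, q_{t-1}`, i.e. the sum of all monomials of total degree `k`. -/
def hfull (t k : ℕ) : MvPolynomial (Fin t) ℤ :=
  ∑ α ∈ Finset.Nat.antidiagonalTuple t k, ∏ i : Fin t, MvPolynomial.X i ^ α i

/-- `ffix m p ℓ` = `i_ℓ(p)` : the first fixed point of type `ℓ`, the smallest `k` with
`2 ≤ k ≤ n` and `p_k ≥ m*(k-2)+1+ℓ` (1-indexed), or `n+1` if there is none. -/
def ffix (m : ℕ) {n : ℕ} (p : Fin n → ℕ) (ℓ : ℕ) : ℕ :=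
  sInf ({k | 2 ≤ k ∧ ∃ i : Fin n, (i : ℕ) + 1 = k ∧ m * (k - 2) + 1 + ℓ ≤ p i} ∪ {n + 1})

/-- The extended first fixed points: `i_0 = 2`, `i_{m+1} = n+1`, and `i_ℓ = ffix m p ℓ`
for `1 ≤ ℓ ≤ m`. -/
def ffixE (m : ℕ) {n : ℕ} (p : Fin n → ℕ) (j : ℕ) : ℕ :=
  if j = 0 then 2 else if j = m + 1 then n + 1 else ffix m p j

/-- `pget p k` = `p_k` (1-indexed), `0` out of range. -/
def pget {n : ℕ} (p : Fin n → ℕ) (k : ℕ) : ℕ := if h : k - 1 < n then p ⟨k - 1, h⟩ else 0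

/-- The `(ℓ+1)`-st part `P_{ℓ+1}` (for `0 ≤ ℓ ≤ m`) of the first-return decomposition of `p`:
the list `(p_k - (p_{i_ℓ} - 1))` for `i_ℓ ≤ k ≤ i_{ℓ+1} - 1`. -/
def FRD (m : ℕ) {n : ℕ} (p : Fin n → ℕ) (ℓ : ℕ) : List ℕ :=
  (List.range (ffixE m p (ℓ + 1) - ffixE m p ℓ)).map
    (fun t => pget p (ffixE m p ℓ + t) - (pget p (ffixE m p ℓ) - 1))

/-- A list is a u-parking distribution: nondecreasing, with `l.get i ∈ [1, m*i+1]`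
(0-indexed). -/
def isPKlist (m : ℕ) (l : List ℕ) : Prop :=
  l.Pairwise (· ≤ ·) ∧ ∀ i : Fin l.length, 1 ≤ l.get i ∧ l.get i ≤ m * (i : ℕ) + 1

/-- `θ(p)` : the nondecreasing rearrangement of the concatenation of `p` with the list of
all `j ∈ {1, …, m*n-m+1}` with `j ≢ 1 (mod m)`. -/
def theta (m n : ℕ) (p : Fin n → ℕ) : List ℕ :=
  Multiset.sort
    ((List.ofFn p : Multiset ℕ) +
      (((List.range (m * n - m + 1)).map (· + 1)).filter
        (fun j => ¬ j ≡ 1 [MOD m]) : List ℕ)) (· ≤ ·)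

/-- Parking distributions on the `m`-caterpillar of length `n`, as nondecreasing lists. -/
def PKcat (m n : ℕ) : Set (List ℕ) :=
  {a | a.length = m * n - m + 1 ∧ a.Pairwise (· ≤ ·) ∧
       (∀ x ∈ a, 1 ≤ x ∧ x ≤ m * n - m + 1) ∧
       (∀ i : ℕ, 1 ≤ i → i ≤ n →
         m * (i - 1) + 1 ≤ (a.filter (fun x => x ≤ m * (i - 1) + 1)).length) ∧
       (∀ j : ℕ, 1 ≤ j → j ≤ m * n - m + 1 → ¬ j ≡ 1 [MOD m] → j ∈ a)}

/-!
Every u-parking distribution of positive length starts with the lucky entry `1`. Cutting it just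
before its first later lucky entry, at position `s`, writes it uniquely as `1`, a block of `s - 1`
entries lying strictly below the lucky bound, and a u-parking distribution shifted up by `m * s`
that carries all the remaining luck. Hence `B(x;q) = 1 + q · F(x) · B(x;q)`, where
`F = x · Σᵢ #(blocks of length i) · xⁱ` does not depend on `q`, and eliminating `F` between the
equations for `q` and for `t` gives the identity.
-/

namespace UParking

-- Sequences are handled as functions `ℕ → ℕ` vanishing from their length on, so that cutting and
-- gluing need no `Fin` casts.
def extendByZero {n : ℕ} (p : Fin n → ℕ) : ℕ → ℕ :=
  fun i => if h : i < n then p ⟨i, h⟩ else 0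

lemma extendByZero_injective {n : ℕ} : Function.Injective (extendByZero (n := n)) := by
  intro p q h
  funext i
  simpa [extendByZero] using congrFun h i

structure IsBoundedSeq (n : ℕ) (b f : ℕ → ℕ) : Prop where
  eq_zero : ∀ i, n ≤ i → f i = 0
  mono : ∀ i j, i ≤ j → j < n → f i ≤ f j
  one_le : ∀ i, i < n → 1 ≤ f i
  le_bound : ∀ i, i < n → f i ≤ b i

def seqs (n : ℕ) (b : ℕ → ℕ) : Finset (ℕ → ℕ) := (BSeq n b).image extendByZero

lemma mem_BSeq {n : ℕ} {b : ℕ → ℕ} {p : Fin n → ℕ} :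
    p ∈ BSeq n b ↔ Monotone p ∧ ∀ i : Fin n, 1 ≤ p i ∧ p i ≤ b i := by
  simp [BSeq]

lemma mem_seqs {n : ℕ} {b f : ℕ → ℕ} : f ∈ seqs n b ↔ IsBoundedSeq n b f := by
  constructor
  · intro hf
    obtain ⟨p, hp, rfl⟩ := mem_image.1 hf
    obtain ⟨hmono, hbd⟩ := mem_BSeq.1 hp
    refine ⟨fun i hi => by simp [extendByZero, Nat.not_lt.2 hi], fun i j hij hj => ?_,
      fun i hi => by simpa [extendByZero, hi] using (hbd ⟨i, hi⟩).1,
      fun i hi => by simpa [extendByZero, hi] using (hbd ⟨i, hi⟩).2⟩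
    simpa [extendByZero, hj, hij.trans_lt hj] using
      hmono (show (⟨i, hij.trans_lt hj⟩ : Fin n) ≤ ⟨j, hj⟩ from hij)
  · intro hf
    refine mem_image.2 ⟨fun i => f i, mem_BSeq.2 ⟨fun i j hij => hf.mono i j hij j.isLt,
      fun i => ⟨hf.one_le i i.isLt, hf.le_bound i i.isLt⟩⟩, funext fun i => ?_⟩
    by_cases hi : i < n
    · simp [extendByZero, hi]
    · simp [extendByZero, hi, hf.eq_zero i (Nat.not_lt.1 hi)]

abbrev parkSeqs (m n : ℕ) : Finset (ℕ → ℕ) := seqs n (fun i => m * i + 1)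

-- The blocks between the initial `1` and the first return: at 0-based position `k + 1`, an entry
-- below the lucky bound `m * (k + 1) + 1` is at most `m * k + m`.
abbrev primeSeqs (m n : ℕ) : Finset (ℕ → ℕ) := seqs n (fun i => m * i + m)

def luckNat (m n : ℕ) (f : ℕ → ℕ) : ℕ := ((range n).filter fun i => f i = m * i + 1).card

variable {m : ℕ} {R : Type*} [CommRing R]

lemma luck_eq_luckNat {n : ℕ} (p : Fin n → ℕ) : luck m p = luckNat m n (extendByZero p) := by
  rw [luck, luckNat, card_filter, card_filter, ← Fin.sum_univ_eq_sum_range]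
  simp [extendByZero]

lemma aeval_Rpoly (x : R) (n : ℕ) :
    Polynomial.aeval x (Rpoly m n) = ∑ f ∈ parkSeqs m n, x ^ luckNat m n f := by
  have hluck : ∀ p ∈ PK m n, luck m p ∈ range (n + 1) := fun p _ =>
    mem_range.2 (Nat.lt_succ_of_le ((card_filter_le _ _).trans (by simp)))
  rw [parkSeqs, seqs, sum_image fun p _ q _ h => extendByZero_injective h]
  simp_rw [← luck_eq_luckNat]
  rw [← PK, ← sum_fiberwise_of_maps_to hluck]
  simp only [Rpoly, Cnt, map_sum, map_mul, map_natCast, map_pow, Polynomial.aeval_X]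
  refine sum_congr rfl fun k _ => ?_
  rw [sum_congr rfl fun p hp => by rw [(mem_filter.1 hp).2], sum_const, nsmul_eq_mul]

-- 0-indexed: position `firstReturn m n f + 1` is the first lucky one after `0`, or is `n` if there
-- is none.
def firstReturn (m n : ℕ) (f : ℕ → ℕ) : ℕ :=
  Nat.find (p := fun i => n ≤ i + 1 ∨ f (i + 1) = m * (i + 1) + 1) ⟨n, Or.inl (by omega)⟩

section firstReturn

variable {n : ℕ} {f : ℕ → ℕ}

lemma firstReturn_spec : n ≤ firstReturn m n f + 1 ∨
    f (firstReturn m n f + 1) = m * (firstReturn m n f + 1) + 1 :=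
  Nat.find_spec (p := fun i => n ≤ i + 1 ∨ f (i + 1) = m * (i + 1) + 1) _

lemma firstReturn_le : firstReturn m (n + 1) f ≤ n := Nat.find_min' _ (Or.inl le_rfl)

lemma ne_of_lt_firstReturn {k : ℕ} (h : k < firstReturn m n f) :
    k + 1 < n ∧ f (k + 1) ≠ m * (k + 1) + 1 := by
  have := Nat.find_min _ h
  simp only [not_or] at this
  exact ⟨Nat.lt_of_not_le this.1, this.2⟩

end firstReturn

def splitPrefix (i : ℕ) (f : ℕ → ℕ) : ℕ → ℕ := fun k => if k < i then f (k + 1) else 0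

def splitSuffix (m i j : ℕ) (f : ℕ → ℕ) : ℕ → ℕ :=
  fun k => if k < j then f (k + (i + 1)) - m * (i + 1) else 0

def glue (m i j : ℕ) (b r : ℕ → ℕ) : ℕ → ℕ := fun k =>
  if k = 0 then 1
  else if k ≤ i then b (k - 1)
  else if k ≤ i + j then r (k - (i + 1)) + m * (i + 1)
  else 0

section glue

variable {i j : ℕ} {b r : ℕ → ℕ}

lemma glue_zero : glue m i j b r 0 = 1 := rfl

lemma glue_of_le {k : ℕ} (hk : 1 ≤ k) (hki : k ≤ i) : glue m i j b r k = b (k - 1) := by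
  simp [glue, hki, show k ≠ 0 by omega]

lemma glue_of_lt {k : ℕ} (hik : i < k) (hk : k ≤ i + j) :
    glue m i j b r k = r (k - (i + 1)) + m * (i + 1) := by
  simp [glue, hk, show k ≠ 0 by omega, show ¬ k ≤ i by omega]

lemma glue_bounds_of_le (hb : IsBoundedSeq i (fun k => m * k + m) b) {k : ℕ} (hk : 1 ≤ k)
    (hki : k ≤ i) : 1 ≤ glue m i j b r k ∧ glue m i j b r k ≤ m * k := by
  have hmk : m * (k - 1) + m = m * k := by
    rw [← Nat.mul_succ, Nat.succ_eq_add_one, Nat.sub_add_cancel hk]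
  rw [glue_of_le hk hki, ← hmk]
  exact ⟨hb.one_le (k - 1) (by omega), hb.le_bound (k - 1) (by omega)⟩

lemma glue_bounds_of_lt (hr : IsBoundedSeq j (fun k => m * k + 1) r) {k : ℕ} (hik : i < k)
    (hk : k ≤ i + j) :
    m * (i + 1) + 1 ≤ glue m i j b r k ∧ glue m i j b r k ≤ m * k + 1 := by
  have hmk : m * (k - (i + 1)) + m * (i + 1) = m * k := by
    rw [← Nat.mul_add, Nat.sub_add_cancel hik]
  have := hr.one_le (k - (i + 1)) (by omega)
  have := hr.le_bound (k - (i + 1)) (by omega)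
  rw [glue_of_lt hik hk]
  omega

lemma isBoundedSeq_glue (hb : IsBoundedSeq i (fun k => m * k + m) b)
    (hr : IsBoundedSeq j (fun k => m * k + 1) r) :
    IsBoundedSeq (i + j + 1) (fun k => m * k + 1) (glue m i j b r) := by
  have hbounds : ∀ k, k ≤ i + j →
      1 ≤ glue m i j b r k ∧ glue m i j b r k ≤ m * k + 1 := by
    intro k hk
    rcases Nat.eq_zero_or_pos k with rfl | hk0
    · simp [glue_zero]
    by_cases hki : k ≤ i
    · have := glue_bounds_of_le (j := j) (r := r) hb hk0 hki
      omega
    · exact ⟨by have := glue_bounds_of_lt (b := b) hr (by omega) hk; omega,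
        (glue_bounds_of_lt hr (by omega) hk).2⟩
  refine ⟨fun k hk => ?_, fun k l hkl hl => ?_, fun k hk => (hbounds k (by omega)).1,
    fun k hk => (hbounds k (by omega)).2⟩
  · simp [glue, show k ≠ 0 by omega, show ¬ k ≤ i by omega, show ¬ k ≤ i + j by omega]
  rcases Nat.eq_zero_or_pos k with rfl | hk0
  · exact glue_zero (m := m) ▸ (hbounds l (by omega)).1
  by_cases hki : k ≤ i
  · by_cases hli : l ≤ i
    · rw [glue_of_le hk0 hki, glue_of_le (by omega) hli]
      exact hb.mono _ _ (by omega) (by omega)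
    · have : m * k ≤ m * (i + 1) := Nat.mul_le_mul_left m (by omega)
      have := (glue_bounds_of_le (j := j) (r := r) hb hk0 hki).2
      have := (glue_bounds_of_lt (b := b) hr (k := l) (by omega) (by omega : l ≤ i + j)).1
      omega
  · rw [glue_of_lt (by omega) (by omega), glue_of_lt (by omega) (by omega)]
    exact Nat.add_le_add_right (hr.mono _ _ (by omega) (by omega)) _

lemma firstReturn_glue (hb : IsBoundedSeq i (fun k => m * k + m) b)
    (hr : IsBoundedSeq j (fun k => m * k + 1) r) :
    firstReturn m (i + j + 1) (glue m i j b r) = i := by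
  refine (Nat.find_eq_iff _).2 ⟨?_, fun k hk hk' => ?_⟩
  · rcases Nat.eq_zero_or_pos j with rfl | hj
    · exact Or.inl le_rfl
    · have := hr.one_le 0 hj
      have := hr.le_bound 0 hj
      rw [glue_of_lt (by omega) (by omega)]
      right
      simp only [Nat.sub_self]
      omega
  · have := (glue_bounds_of_le (j := j) (r := r) hb (k := k + 1) (by omega) (by omega)).2
    omega

lemma luckNat_glue (hb : IsBoundedSeq i (fun k => m * k + m) b) :
    luckNat m (i + j + 1) (glue m i j b r) = luckNat m j r + 1 := by
  rw [luckNat, luckNat, card_filter, card_filter, show i + j + 1 = (i + 1) + j by omega,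
    sum_range_add, sum_range_succ']
  have hprime : ∀ k ∈ range i, glue m i j b r (k + 1) ≠ m * (k + 1) + 1 := fun k hk => by
    have := (glue_bounds_of_le (j := j) (r := r) hb (k := k + 1) (by omega)
      (by simp at hk; omega)).2
    omega
  have hsuffix : ∀ k ∈ range j,
      (glue m i j b r (i + 1 + k) = m * (i + 1 + k) + 1 ↔ r k = m * k + 1) := fun k hk => by
    rw [glue_of_lt (by omega) (by simp at hk; omega), Nat.add_sub_cancel_left,
      show m * (i + 1 + k) = m * k + m * (i + 1) by ring]
    omega
  rw [sum_eq_zero fun k hk => if_neg (hprime k hk),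
    sum_congr rfl fun k hk => if_congr (hsuffix k hk) rfl rfl]
  simp [glue_zero, add_comm]

lemma splitPrefix_glue (hb : IsBoundedSeq i (fun k => m * k + m) b) :
    splitPrefix i (glue m i j b r) = b := by
  funext k
  by_cases hk : k < i
  · simp [splitPrefix, hk, glue_of_le (m := m) (j := j) (b := b) (r := r) (k := k + 1)
      (by omega) hk]
  · simp [splitPrefix, hk, hb.eq_zero k (by omega)]

lemma splitSuffix_glue (hr : IsBoundedSeq j (fun k => m * k + 1) r) :
    splitSuffix m i j (glue m i j b r) = r := by
  funext k
  by_cases hk : k < j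
  · simp [splitSuffix, hk, glue_of_lt (m := m) (b := b) (r := r) (show i < k + (i + 1) by omega)
      (show k + (i + 1) ≤ i + j by omega)]
  · simp [splitSuffix, hk, hr.eq_zero k (by omega)]

end glue

section split

variable {n : ℕ} {f : ℕ → ℕ} (hf : IsBoundedSeq (n + 1) (fun k => m * k + 1) f)
include hf

lemma isBoundedSeq_splitPrefix :
    IsBoundedSeq (firstReturn m (n + 1) f) (fun k => m * k + m)
      (splitPrefix (firstReturn m (n + 1) f) f) where
  eq_zero k hk := by simp [splitPrefix, Nat.not_lt.2 hk]
  mono k l hkl hl := by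
    simp only [splitPrefix, if_pos hl, if_pos (hkl.trans_lt hl)]
    exact hf.mono _ _ (by omega) (ne_of_lt_firstReturn hl).1
  one_le k hk := by
    simp only [splitPrefix, if_pos hk]
    exact hf.one_le _ (ne_of_lt_firstReturn hk).1
  le_bound k hk := by
    simp only [splitPrefix, if_pos hk]
    have hle := hf.le_bound _ (ne_of_lt_firstReturn hk).1
    have hne := (ne_of_lt_firstReturn hk).2
    rw [Nat.mul_succ] at hle hne
    omega

lemma le_apply_of_firstReturn_lt {k : ℕ} (hk : firstReturn m (n + 1) f < k) (hkn : k ≤ n) :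
    m * (firstReturn m (n + 1) f + 1) + 1 ≤ f k := by
  have hret :=
    firstReturn_spec.resolve_left (show ¬ n + 1 ≤ firstReturn m (n + 1) f + 1 by omega)
  exact hret ▸ hf.mono _ _ hk (by omega)

lemma isBoundedSeq_splitSuffix :
    IsBoundedSeq (n - firstReturn m (n + 1) f) (fun k => m * k + 1)
      (splitSuffix m (firstReturn m (n + 1) f) (n - firstReturn m (n + 1) f) f) where
  eq_zero k hk := by simp [splitSuffix, Nat.not_lt.2 hk]
  mono k l hkl hl := by
    simp only [splitSuffix, if_pos hl, if_pos (hkl.trans_lt hl)]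
    exact Nat.sub_le_sub_right (hf.mono _ _ (by omega) (by omega)) _
  one_le k hk := by
    simp only [splitSuffix, if_pos hk]
    have := le_apply_of_firstReturn_lt hf (k := k + (firstReturn m (n + 1) f + 1)) (by omega)
      (by omega)
    omega
  le_bound k hk := by
    simp only [splitSuffix, if_pos hk]
    have := hf.le_bound (k + (firstReturn m (n + 1) f + 1)) (by omega)
    rw [Nat.mul_add] at this
    omega

lemma glue_split :
    glue m (firstReturn m (n + 1) f) (n - firstReturn m (n + 1) f)
      (splitPrefix (firstReturn m (n + 1) f) f)
      (splitSuffix m (firstReturn m (n + 1) f) (n - firstReturn m (n + 1) f) f) = f := by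
  have hret := fun k => le_apply_of_firstReturn_lt hf (k := k)
  set i := firstReturn m (n + 1) f
  have hi : i ≤ n := firstReturn_le
  funext k
  rcases Nat.eq_zero_or_pos k with rfl | hk0
  · have := hf.one_le 0 (by omega)
    have := hf.le_bound 0 (by omega)
    rw [glue_zero]
    omega
  by_cases hki : k ≤ i
  · rw [glue_of_le hk0 hki]
    simp [splitPrefix, show k - 1 < i by omega, Nat.sub_add_cancel hk0]
  by_cases hkn : k ≤ n
  · have := hret (k := k) (by omega) hkn
    rw [glue_of_lt (by omega) (by omega)]
    simp only [splitSuffix, if_pos (show k - (i + 1) < n - i by omega),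
      Nat.sub_add_cancel (show i + 1 ≤ k by omega)]
    omega
  · simp [glue, show k ≠ 0 by omega, hki, show ¬ k ≤ i + (n - i) by omega,
      hf.eq_zero k (by omega)]

end split

def splitSeqs (m n : ℕ) : Finset (Σ _ : ℕ × ℕ, (ℕ → ℕ) × (ℕ → ℕ)) :=
  (antidiagonal n).sigma fun ij => primeSeqs m ij.1 ×ˢ parkSeqs m ij.2

lemma mem_splitSeqs {n i j : ℕ} {b r : ℕ → ℕ} :
    ⟨(i, j), (b, r)⟩ ∈ splitSeqs m n ↔
      i + j = n ∧ IsBoundedSeq i (fun k => m * k + m) b ∧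
        IsBoundedSeq j (fun k => m * k + 1) r := by
  simp [splitSeqs, mem_seqs]

def split (m n : ℕ) (f : ℕ → ℕ) : Σ _ : ℕ × ℕ, (ℕ → ℕ) × (ℕ → ℕ) :=
  ⟨(firstReturn m (n + 1) f, n - firstReturn m (n + 1) f),
    (splitPrefix (firstReturn m (n + 1) f) f,
      splitSuffix m (firstReturn m (n + 1) f) (n - firstReturn m (n + 1) f) f)⟩

lemma sum_parkSeqs_succ (x : R) (n : ℕ) :
    ∑ f ∈ parkSeqs m (n + 1), x ^ luckNat m (n + 1) f =
      x * ∑ ij ∈ antidiagonal n,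
        ((primeSeqs m ij.1).card : R) * ∑ r ∈ parkSeqs m ij.2, x ^ luckNat m ij.2 r := by
  have hbij : ∑ σ ∈ splitSeqs m n, x ^ (luckNat m σ.1.2 σ.2.2 + 1) =
      ∑ f ∈ parkSeqs m (n + 1), x ^ luckNat m (n + 1) f := by
    refine sum_nbij' (fun σ => glue m σ.1.1 σ.1.2 σ.2.1 σ.2.2) (split m n) ?_ ?_ ?_ ?_ ?_
    · rintro ⟨⟨i, j⟩, b, r⟩ hσ
      obtain ⟨rfl, hb, hr⟩ := mem_splitSeqs.1 hσ
      exact mem_seqs.2 (isBoundedSeq_glue hb hr)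
    · intro f hf
      have hf := mem_seqs.1 hf
      exact mem_splitSeqs.2 ⟨by have := firstReturn_le (m := m) (f := f) (n := n); omega,
        isBoundedSeq_splitPrefix hf, isBoundedSeq_splitSuffix hf⟩
    · rintro ⟨⟨i, j⟩, b, r⟩ hσ
      obtain ⟨rfl, hb, hr⟩ := mem_splitSeqs.1 hσ
      simp only [split, firstReturn_glue hb hr, splitPrefix_glue hb, splitSuffix_glue hr,
        Nat.add_sub_cancel_left]
    · intro f hf
      exact glue_split (mem_seqs.1 hf)
    · rintro ⟨⟨i, j⟩, b, r⟩ hσ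
      obtain ⟨rfl, hb, -⟩ := mem_splitSeqs.1 hσ
      rw [luckNat_glue hb]
  rw [← hbij, splitSeqs, sum_sigma, mul_sum]
  refine sum_congr rfl fun ij _ => ?_
  simp only [sum_product, sum_const, nsmul_eq_mul, mul_sum, pow_succ]
  exact sum_congr rfl fun r _ => by ring

lemma sum_parkSeqs_zero (x : R) : ∑ f ∈ parkSeqs m 0, x ^ luckNat m 0 f = 1 := by
  have : parkSeqs m 0 = {0} := by
    ext f
    simp only [mem_seqs, mem_singleton]
    exact ⟨fun hf => funext fun i => hf.eq_zero i (Nat.zero_le i),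
      fun hf => ⟨fun i _ => hf ▸ rfl, by simp, by simp, by simp⟩⟩
  simp [this, luckNat]

lemma aeval_Rpoly_succ (x : R) (n : ℕ) :
    Polynomial.aeval x (Rpoly m (n + 1)) = x * ∑ ij ∈ antidiagonal n,
      ((primeSeqs m ij.1).card : R) * Polynomial.aeval x (Rpoly m ij.2) := by
  simp only [aeval_Rpoly, sum_parkSeqs_succ]

def primeSeries (m : ℕ) : PowerSeries R := PowerSeries.mk fun n => ((primeSeqs m n).card : R)

lemma mk_aeval_Rpoly_eq_one_add (x : R) :
    PowerSeries.mk (fun n => Polynomial.aeval x (Rpoly m n)) =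
      1 + PowerSeries.C x * (PowerSeries.X * primeSeries m) *
        PowerSeries.mk (fun n => Polynomial.aeval x (Rpoly m n)) := by
  ext (_ | n)
  · simp [aeval_Rpoly, sum_parkSeqs_zero]
  · rw [mul_assoc, mul_assoc, map_add, PowerSeries.coeff_C_mul, PowerSeries.coeff_succ_X_mul,
      PowerSeries.coeff_mul, PowerSeries.coeff_mk, aeval_Rpoly_succ]
    simp [primeSeries]

end UParking

lemma mul_sub_mul_eq_of_eq_one_add_mul {R : Type*} [CommRing R] {a b f x y : R}
    (ha : a = 1 + x * f * a) (hb : b = 1 + y * f * b) : x * a - y * b = (x - y) * (a * b) := by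
  linear_combination (y * b) * ha - (x * a) * hb

theorem stmt12_general (m : ℕ) :
    PowerSeries.C (R := MvPolynomial (Fin 2) ℤ) (MvPolynomial.X 0) *
          (PowerSeries.mk fun n =>
            Polynomial.aeval (MvPolynomial.X 0 : MvPolynomial (Fin 2) ℤ) (Rpoly m n)) -
        PowerSeries.C (R := MvPolynomial (Fin 2) ℤ) (MvPolynomial.X 1) *
          (PowerSeries.mk fun n =>
            Polynomial.aeval (MvPolynomial.X 1 : MvPolynomial (Fin 2) ℤ) (Rpoly m n)) =
      PowerSeries.C (R := MvPolynomial (Fin 2) ℤ) (MvPolynomial.X 0 - MvPolynomial.X 1) *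
        ((PowerSeries.mk fun n =>
            Polynomial.aeval (MvPolynomial.X 0 : MvPolynomial (Fin 2) ℤ) (Rpoly m n)) *
          (PowerSeries.mk fun n =>
            Polynomial.aeval (MvPolynomial.X 1 : MvPolynomial (Fin 2) ℤ) (Rpoly m n))) := by
  rw [map_sub]
  exact mul_sub_mul_eq_of_eq_one_add_mul (UParking.mk_aeval_Rpoly_eq_one_add _)
    (UParking.mk_aeval_Rpoly_eq_one_add _)

theorem stmt12 (m : ℕ) (hm : 1 ≤ m) :
    PowerSeries.C (R := MvPolynomial (Fin 2) ℤ) (MvPolynomial.X 0) *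
          (PowerSeries.mk fun n =>
            Polynomial.aeval (MvPolynomial.X 0 : MvPolynomial (Fin 2) ℤ) (Rpoly m n)) -
        PowerSeries.C (R := MvPolynomial (Fin 2) ℤ) (MvPolynomial.X 1) *
          (PowerSeries.mk fun n =>
            Polynomial.aeval (MvPolynomial.X 1 : MvPolynomial (Fin 2) ℤ) (Rpoly m n)) =
      PowerSeries.C (R := MvPolynomial (Fin 2) ℤ) (MvPolynomial.X 0 - MvPolynomial.X 1) *
        ((PowerSeries.mk fun n =>
            Polynomial.aeval (MvPolynomial.X 0 : MvPolynomial (Fin 2) ℤ) (Rpoly m n)) *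
          (PowerSeries.mk fun n =>
            Polynomial.aeval (MvPolynomial.X 1 : MvPolynomial (Fin 2) ℤ) (Rpoly m n))) :=
  stmt12_general m
end
end

section
/- For every n ≥ 0, the following identity holds in ℤ[q,t]: Σ_{k=0}^{n} R_k(q)·R_{n−k}(t) = Σ_{k=0}^{n} C_{n,k}·h_k(q,t), where h_k(q,t) = Σ_{s=0}^{k} q^{k−s} t^{s} is the complete homogeneous symmetric polynomial of degree k in q and t. -/
open scoped Classical
open Finset

noncomputable section

/-!
Gluing `a ∈ PK(i)` and `b ∈ PK(j)` into `a · (b + m i) ∈ PK(i + j)` makes index `i`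
(counting from 0) lucky unless `j = 0`; conversely `p ∈ PK(n)` splits at `k` exactly when `k`
is a lucky index or `k = n`, a "cut". Hence `R_k(q) R_{n-k}(t)` sums
`q^(luck below k) t^(luck from k on)` over the `p` having `k` as a cut. A `p` with `L` lucky
indices has `L + 1` cuts, and the number of lucky indices from the cut on is a bijection from
the cuts onto `{0, …, L}`, so `p` contributes exactly `h_L(q, t)`.
-/

theorem sum_insert_card_filter_lt_le {M : Type*} [AddCommMonoid M] {S : Finset ℕ} {n : ℕ}
    (hS : ∀ s ∈ S, s < n) (f : ℕ → ℕ → M) :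
    ∑ k ∈ insert n S, f #{s ∈ S | s < k} #{s ∈ S | k ≤ s} =
      ∑ s ∈ range (#S + 1), f (#S - s) s := by
  set high : ℕ → ℕ := fun k => #{s ∈ S | k ≤ s}
  have high_injOn : Set.InjOn high ↑(insert n S) := by
    refine StrictAntiOn.injOn fun k hk k' hk' hlt => ?_
    have hkS : k ∈ S := by
      rcases mem_insert.1 hk with rfl | h
      · rcases mem_insert.1 hk' with rfl | h' <;> [omega; exact absurd (hS _ h') (by omega)]
      · exact h
    refine card_lt_card ⟨monotone_filter_right _ fun s _ (hs : k' ≤ s) => hlt.le.trans hs,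
      fun h => ?_⟩
    exact absurd (mem_filter.1 (h (mem_filter.2 ⟨hkS, le_rfl⟩))).2 (not_le.2 hlt)
  have himage : (insert n S).image high = range (#S + 1) := by
    refine eq_of_subset_of_card_le (fun s hs => ?_) ?_
    · obtain ⟨k, -, rfl⟩ := mem_image.1 hs
      exact mem_range.2 (Nat.lt_succ_of_le (card_filter_le _ _))
    · rw [card_image_of_injOn high_injOn, card_insert_of_notMem fun h => (hS n h).false,
        card_range]
  rw [← himage, sum_image high_injOn]
  refine sum_congr rfl fun k _ => ?_
  have := card_filter_add_card_filter_not (s := S) (fun s => k ≤ s)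
  simp only [not_le] at this
  rw [← this, Nat.add_sub_cancel_left]

lemma mem_PK {m n : ℕ} {p : Fin n → ℕ} :
    p ∈ PK m n ↔ Monotone p ∧ ∀ i : Fin n, 1 ≤ p i ∧ p i ≤ m * i + 1 := by
  simp [PK, BSeq]

lemma sum_Cnt_mul {R : Type*} [NonAssocSemiring R] (m n : ℕ) (g : ℕ → R) :
    ∑ k ∈ range (n + 1), (Cnt m n k : R) * g k = ∑ p ∈ PK m n, g (luck m p) := by
  have luck_mem : ∀ p ∈ PK m n, luck m p ∈ range (n + 1) := fun p _ =>
    mem_range.2 (Nat.lt_succ_of_le ((card_filter_le _ _).trans_eq (card_fin n)))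
  rw [← sum_fiberwise_of_maps_to luck_mem]
  refine sum_congr rfl fun k _ => ?_
  rw [sum_congr rfl fun p hp => congrArg g (mem_filter.1 hp).2, sum_const, Cnt, nsmul_eq_mul]

lemma aeval_Rpoly {A : Type*} [CommRing A] (x : A) (m n : ℕ) :
    Polynomial.aeval x (Rpoly m n) = ∑ p ∈ PK m n, x ^ luck m p := by
  simp only [Rpoly, map_sum, map_mul, map_natCast, map_pow, Polynomial.aeval_X]
  exact sum_Cnt_mul m n (x ^ ·)

def luckyIndices (m : ℕ) {n : ℕ} (p : Fin n → ℕ) : Finset ℕ :=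
  (univ.filter fun i : Fin n => p i = m * i + 1).map Fin.valEmbedding

def cuts (m : ℕ) {n : ℕ} (p : Fin n → ℕ) : Finset ℕ := insert n (luckyIndices m p)

lemma card_luckyIndices (m : ℕ) {n : ℕ} (p : Fin n → ℕ) : #(luckyIndices m p) = luck m p :=
  card_map _

lemma lt_of_mem_luckyIndices {m n k : ℕ} {p : Fin n → ℕ} (hk : k ∈ luckyIndices m p) : k < n := by
  obtain ⟨i, -, rfl⟩ := mem_map.1 hk
  exact i.isLt

lemma le_of_mem_cuts {m n k : ℕ} {p : Fin n → ℕ} (hk : k ∈ cuts m p) : k ≤ n := by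
  rcases mem_insert.1 hk with rfl | hk
  · exact le_rfl
  · exact (lt_of_mem_luckyIndices hk).le

lemma mem_luckyIndices {m n : ℕ} {p : Fin n → ℕ} (i : Fin n) :
    (i : ℕ) ∈ luckyIndices m p ↔ p i = m * i + 1 := by
  simp [luckyIndices, Fin.val_inj]

def shiftAppend (m : ℕ) {i j : ℕ} (a : Fin i → ℕ) (b : Fin j → ℕ) : Fin (i + j) → ℕ :=
  Fin.append a fun y => b y + m * i

def splitShift (m : ℕ) {i j : ℕ} (p : Fin (i + j) → ℕ) : (Fin i → ℕ) × (Fin j → ℕ) :=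
  (fun x => p (Fin.castAdd j x), fun y => p (Fin.natAdd i y) - m * i)

section Concatenation

variable {m i j : ℕ}

lemma shiftAppend_mem_PK {a : Fin i → ℕ} {b : Fin j → ℕ} (ha : a ∈ PK m i) (hb : b ∈ PK m j) :
    shiftAppend m a b ∈ PK m (i + j) := by
  obtain ⟨ha_mono, ha_bd⟩ := mem_PK.1 ha
  obtain ⟨hb_mono, hb_bd⟩ := mem_PK.1 hb
  refine mem_PK.2 ⟨fun x y hxy => ?_, Fin.addCases (fun x => ?_) fun y => ?_⟩
  · induction x using Fin.addCases with
    | left x => induction y using Fin.addCases with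
      | left y =>
        simpa [shiftAppend] using ha_mono (show x ≤ y from hxy)
      | right y =>
        have : m * x ≤ m * i := Nat.mul_le_mul_left m x.isLt.le
        simp only [shiftAppend, Fin.append_left, Fin.append_right]
        linarith [(ha_bd x).2, (hb_bd y).1]
    | right x => induction y using Fin.addCases with
      | left y =>
        have := Fin.le_iff_val_le_val.1 hxy
        simp only [Fin.val_natAdd, Fin.val_castAdd] at this
        omega
      | right y =>
        simp only [shiftAppend, Fin.append_right]
        exact Nat.add_le_add_right (hb_mono (Nat.le_of_add_le_add_left hxy)) _
  · simpa [shiftAppend] using ha_bd x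
  · simp only [shiftAppend, Fin.append_right, Fin.val_natAdd]
    constructor <;> nlinarith [hb_bd y]

lemma luckyIndices_shiftAppend (a : Fin i → ℕ) (b : Fin j → ℕ) :
    luckyIndices m (shiftAppend m a b) =
      luckyIndices m a ∪ (luckyIndices m b).map (addLeftEmbedding i) := by
  have lucky_right (y : Fin j) :
      b y + m * i = m * (i + y) + 1 ↔ b y = m * y + 1 := by
    rw [mul_add]; omega
  ext k
  simp only [luckyIndices, mem_union, mem_map, mem_filter, mem_univ, true_and,
    Fin.valEmbedding_apply, addLeftEmbedding_apply]
  constructor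
  · rintro ⟨x, hx, rfl⟩
    induction x using Fin.addCases with
    | left x => exact Or.inl ⟨x, by simpa [shiftAppend] using hx, rfl⟩
    | right y =>
      refine Or.inr ⟨y, ⟨y, (lucky_right y).1 (by simpa [shiftAppend] using hx), rfl⟩, rfl⟩
  · rintro (⟨x, hx, rfl⟩ | ⟨_, ⟨y, hy, rfl⟩, rfl⟩)
    · exact ⟨Fin.castAdd j x, by simpa [shiftAppend] using hx, rfl⟩
    · exact ⟨Fin.natAdd i y, by simpa [shiftAppend] using (lucky_right y).2 hy, rfl⟩

lemma card_filter_lt_luckyIndices_shiftAppend (a : Fin i → ℕ) (b : Fin j → ℕ) :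
    #{k ∈ luckyIndices m (shiftAppend m a b) | k < i} = luck m a := by
  rw [luckyIndices_shiftAppend, filter_union, filter_true_of_mem fun k hk =>
    lt_of_mem_luckyIndices hk, filter_false_of_mem (by simp), union_empty, card_luckyIndices]

lemma card_filter_le_luckyIndices_shiftAppend (a : Fin i → ℕ) (b : Fin j → ℕ) :
    #{k ∈ luckyIndices m (shiftAppend m a b) | i ≤ k} = luck m b := by
  rw [luckyIndices_shiftAppend, filter_union, filter_false_of_mem fun k hk =>
    not_le.2 (lt_of_mem_luckyIndices hk), filter_true_of_mem (by simp), empty_union, card_map,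
    card_luckyIndices]

lemma mem_cuts_shiftAppend (a : Fin i → ℕ) {b : Fin j → ℕ} (hb : b ∈ PK m j) :
    i ∈ cuts m (shiftAppend m a b) := by
  rcases Nat.eq_zero_or_pos j with rfl | hj
  · exact mem_insert_self _ _
  · have hb0 := (mem_PK.1 hb).2 ⟨0, hj⟩
    refine mem_insert_of_mem ?_
    rw [luckyIndices_shiftAppend]
    refine mem_union_right _ (mem_map.2 ⟨0, ?_, add_zero i⟩)
    simp only [mul_zero, zero_add] at hb0
    exact (mem_luckyIndices (p := b) ⟨0, hj⟩).2 (by simp only [mul_zero, zero_add]; omega)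

lemma mul_add_one_le_of_mem_cuts {p : Fin (i + j) → ℕ} (hp : p ∈ PK m (i + j)) (hi : i ∈ cuts m p)
    (y : Fin j) : m * i + 1 ≤ p (Fin.natAdd i y) := by
  rcases mem_insert.1 hi with hij | hi
  · exact absurd y.isLt (by omega)
  · have hlucky := (mem_luckyIndices (p := p) ⟨i, lt_of_mem_luckyIndices hi⟩).1 hi
    exact hlucky.symm.le.trans ((mem_PK.1 hp).1 (Fin.le_iff_val_le_val.2 (by simp)))

lemma splitShift_mem_PK {p : Fin (i + j) → ℕ} (hp : p ∈ PK m (i + j)) (hi : i ∈ cuts m p) :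
    (splitShift m p).1 ∈ PK m i ∧ (splitShift m p).2 ∈ PK m j := by
  obtain ⟨hp_mono, hp_bd⟩ := mem_PK.1 hp
  refine ⟨mem_PK.2 ⟨fun x y hxy => hp_mono hxy, fun x => hp_bd _⟩,
    mem_PK.2 ⟨fun x y hxy => Nat.sub_le_sub_right (hp_mono (Nat.add_le_add_left hxy i)) _,
      fun y => ?_⟩⟩
  have hlow := mul_add_one_le_of_mem_cuts hp hi y
  have hhigh := (hp_bd (Fin.natAdd i y)).2
  simp only [splitShift, Fin.val_natAdd, mul_add] at hhigh ⊢
  omega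

lemma splitShift_shiftAppend (a : Fin i → ℕ) (b : Fin j → ℕ) :
    splitShift m (shiftAppend m a b) = (a, b) := by
  simp [splitShift, shiftAppend]

lemma shiftAppend_splitShift {p : Fin (i + j) → ℕ} (hp : p ∈ PK m (i + j))
    (hi : i ∈ cuts m p) : shiftAppend m (splitShift m p).1 (splitShift m p).2 = p := by
  have hsub (y : Fin j) : p (Fin.natAdd i y) - m * i + m * i = p (Fin.natAdd i y) :=
    Nat.sub_add_cancel (Nat.le_of_succ_le (mul_add_one_le_of_mem_cuts hp hi y))
  simp only [shiftAppend, splitShift, hsub]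
  exact Fin.append_castAdd_natAdd

theorem sum_PK_product {M : Type*} [AddCommMonoid M] (f : ℕ → ℕ → M) :
    ∑ ab ∈ PK m i ×ˢ PK m j, f (luck m ab.1) (luck m ab.2) =
      ∑ p ∈ PK m (i + j) with i ∈ cuts m p,
        f #{k ∈ luckyIndices m p | k < i} #{k ∈ luckyIndices m p | i ≤ k} := by
  refine sum_nbij' (fun ab => shiftAppend m ab.1 ab.2) (splitShift m) (fun ab hab => ?_)
    (fun p hp => ?_) (fun ab _ => splitShift_shiftAppend ab.1 ab.2) (fun p hp => ?_)
    (fun ab _ => ?_)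
  · obtain ⟨ha, hb⟩ := mem_product.1 hab
    exact mem_filter.2 ⟨shiftAppend_mem_PK ha hb, mem_cuts_shiftAppend ab.1 hb⟩
  · obtain ⟨hp, hi⟩ := mem_filter.1 hp
    exact mem_product.2 (splitShift_mem_PK hp hi)
  · obtain ⟨hp, hi⟩ := mem_filter.1 hp
    exact shiftAppend_splitShift hp hi
  · rw [card_filter_lt_luckyIndices_shiftAppend, card_filter_le_luckyIndices_shiftAppend]

lemma aeval_Rpoly_mul_aeval_Rpoly {A : Type*} [CommRing A] (x y : A) {k n : ℕ} (hk : k ≤ n) :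
    Polynomial.aeval x (Rpoly m k) * Polynomial.aeval y (Rpoly m (n - k)) =
      ∑ p ∈ PK m n with k ∈ cuts m p,
        x ^ #{l ∈ luckyIndices m p | l < k} * y ^ #{l ∈ luckyIndices m p | k ≤ l} := by
  obtain ⟨j, rfl⟩ := Nat.exists_eq_add_of_le hk
  rw [Nat.add_sub_cancel_left, aeval_Rpoly, aeval_Rpoly, sum_mul_sum, ← sum_product']
  exact sum_PK_product fun a b => x ^ a * y ^ b

lemma sum_cuts {M : Type*} [AddCommMonoid M] {n : ℕ} (p : Fin n → ℕ) (f : ℕ → ℕ → M) :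
    ∑ k ∈ cuts m p, f #{l ∈ luckyIndices m p | l < k} #{l ∈ luckyIndices m p | k ≤ l} =
      ∑ s ∈ range (luck m p + 1), f (luck m p - s) s := by
  rw [← card_luckyIndices]
  exact sum_insert_card_filter_lt_le (fun _ => lt_of_mem_luckyIndices) f

end Concatenation

theorem stmt13_general (m : ℕ) (n : ℕ) :
    ∑ k ∈ Finset.range (n + 1),
        Polynomial.aeval (MvPolynomial.X 0 : MvPolynomial (Fin 2) ℤ) (Rpoly m k) *
          Polynomial.aeval (MvPolynomial.X 1 : MvPolynomial (Fin 2) ℤ) (Rpoly m (n - k)) =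
      ∑ k ∈ Finset.range (n + 1),
        (Cnt m n k : MvPolynomial (Fin 2) ℤ) *
          ∑ s ∈ Finset.range (k + 1),
            MvPolynomial.X 0 ^ (k - s) * MvPolynomial.X 1 ^ s := by
  let x : MvPolynomial (Fin 2) ℤ := MvPolynomial.X 0
  let y : MvPolynomial (Fin 2) ℤ := MvPolynomial.X 1
  calc _ = ∑ k ∈ range (n + 1), ∑ p ∈ PK m n with k ∈ cuts m p,
          x ^ #{l ∈ luckyIndices m p | l < k} * y ^ #{l ∈ luckyIndices m p | k ≤ l} :=
        sum_congr rfl fun k hk => aeval_Rpoly_mul_aeval_Rpoly x y (mem_range_succ_iff.1 hk)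
    _ = ∑ p ∈ PK m n, ∑ k ∈ cuts m p,
          x ^ #{l ∈ luckyIndices m p | l < k} * y ^ #{l ∈ luckyIndices m p | k ≤ l} := by
        refine sum_comm' fun k p => ?_
        simp only [mem_filter, mem_range_succ_iff]
        constructor
        · rintro ⟨-, hp, hk⟩; exact ⟨hk, hp⟩
        · rintro ⟨hk, hp⟩; exact ⟨le_of_mem_cuts hk, hp, hk⟩
    _ = ∑ p ∈ PK m n, ∑ s ∈ range (luck m p + 1), x ^ (luck m p - s) * y ^ s :=
        sum_congr rfl fun p _ => sum_cuts p fun a b => x ^ a * y ^ b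
    _ = _ := (sum_Cnt_mul m n fun k => ∑ s ∈ range (k + 1), x ^ (k - s) * y ^ s).symm

theorem stmt13 (m : ℕ) (hm : 1 ≤ m) (n : ℕ) :
    ∑ k ∈ Finset.range (n + 1),
        Polynomial.aeval (MvPolynomial.X 0 : MvPolynomial (Fin 2) ℤ) (Rpoly m k) *
          Polynomial.aeval (MvPolynomial.X 1 : MvPolynomial (Fin 2) ℤ) (Rpoly m (n - k)) =
      ∑ k ∈ Finset.range (n + 1),
        (Cnt m n k : MvPolynomial (Fin 2) ℤ) *
          ∑ s ∈ Finset.range (k + 1),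
            MvPolynomial.X 0 ^ (k - s) * MvPolynomial.X 1 ^ s :=
  stmt13_general m n

end
end

section
/- For all integers t ≥ 1 and n ≥ 0, the following identity holds in ℤ[q_0,…,q_{t−1}]: Σ over all weak compositions (α_1, …, α_t) of n into t nonnegative parts of ∏_{i=1}^{t} R_{α_i}(q_{i−1}) equals Σ_{k=0}^{n} C_{n,k}·h_k(q_0, …, q_{t−1}). -/
open scoped Classical
open Finset

noncomputable section

lemma luck_le (m : ℕ) {n : ℕ} (p : Fin n → ℕ) : luck m p ≤ n :=
  (card_filter_le _ _).trans_eq (card_fin n)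

lemma Cnt_eq_zero_of_lt {m n k : ℕ} (h : n < k) : Cnt m n k = 0 := by
  rw [Cnt, card_eq_zero, filter_eq_empty_iff]
  exact fun p _ hk => (luck_le m p).not_gt (hk ▸ h)

lemma Fin.monotone_append {α : Type*} [Preorder α] {a b : ℕ} {f : Fin a → α}
    {g : Fin b → α} (hf : Monotone f) (hg : Monotone g) (hfg : ∀ i j, f i ≤ g j) :
    Monotone (Fin.append f g) := by
  intro x y hxy
  induction x using Fin.addCases with
  | left i =>
    induction y using Fin.addCases with
    | left j => simpa using hf ((Fin.strictMono_castAdd b).le_iff_le.1 hxy)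
    | right j => simpa using hfg i j
  | right i =>
    induction y using Fin.addCases with
    | left j => exact absurd hxy (by simp [Fin.le_def]; omega)
    | right j => simpa using hg ((Fin.strictMono_natAdd a).le_iff_le.1 hxy)

lemma exists_eq_and_eq_add_one_of_lt {f : ℕ → ℕ} (h0 : f 0 = 0)
    (hf : ∀ s, f (s + 1) ≤ f s + 1) {j s : ℕ} (hj : j < f s) :
    ∃ r < s, f r = j ∧ f (r + 1) = j + 1 := by
  induction s with
  | zero => omega
  | succ s ih =>
    by_cases hjs : j < f s
    · obtain ⟨r, hr, hfr⟩ := ih hjs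
      exact ⟨r, by omega, hfr⟩
    · exact ⟨s, by omega, by have := hf s; omega, by have := hf s; omega⟩

def luckBelow (m : ℕ) {n : ℕ} (p : Fin n → ℕ) (s : ℕ) : ℕ :=
  #{i : Fin n | (i : ℕ) < s ∧ p i = m * i + 1}

section luckBelow

variable {m n : ℕ} {p : Fin n → ℕ}

@[simp] lemma luckBelow_zero : luckBelow m p 0 = 0 := by
  simp [luckBelow]

lemma luckBelow_mono : Monotone (luckBelow m p) := fun s s' h =>
  card_le_card fun i => by simp only [mem_filter, mem_univ, true_and]; omega

lemma luckBelow_of_le {s : ℕ} (h : n ≤ s) : luckBelow m p s = luck m p := by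
  unfold luckBelow luck
  congr 1
  exact filter_congr fun i _ => by simp only [and_iff_right_iff_imp]; omega

lemma luckBelow_succ_le (s : ℕ) : luckBelow m p (s + 1) ≤ luckBelow m p s + 1 := by
  have hsub : ({i | (i : ℕ) < s + 1 ∧ p i = m * i + 1} : Finset (Fin n)) ⊆
      univ.filter (fun i : Fin n => (i : ℕ) < s ∧ p i = m * i + 1) ∪
        univ.filter (fun i : Fin n => (i : ℕ) = s) := fun i => by
    simp only [mem_filter, mem_union, mem_univ, true_and]
    omega
  have hs : #{i : Fin n | (i : ℕ) = s} ≤ 1 :=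
    card_le_one.2 fun i hi j hj => Fin.ext (by simp only [mem_filter] at hi hj; omega)
  exact (card_le_card hsub).trans ((card_union_le _ _).trans (Nat.add_le_add_left hs _))

lemma exists_lucky_of_luckBelow_lt {s : ℕ} (h : luckBelow m p s < luckBelow m p (s + 1)) :
    ∃ hs : s < n, p ⟨s, hs⟩ = m * s + 1 := by
  obtain ⟨i, hi, his⟩ := exists_mem_notMem_of_card_lt_card h
  simp only [mem_filter, mem_univ, true_and, not_and] at hi his
  have hi_eq : (i : ℕ) = s := by by_contra hne; exact his (by omega) hi.2
  exact ⟨hi_eq ▸ i.2, by simpa [← hi_eq] using hi.2⟩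

lemma luckBelow_one (hp : p ∈ PK m n) (hn : 0 < n) : luckBelow m p 1 = 1 := by
  have hp0 := (mem_PK.1 hp).2 ⟨0, hn⟩
  refine le_antisymm (by simpa using luckBelow_succ_le (m := m) (p := p) 0) ?_
  refine card_pos.2 ⟨⟨0, hn⟩, mem_filter.2 ⟨mem_univ _, Nat.one_pos, ?_⟩⟩
  simp only [mul_zero, zero_add] at hp0 ⊢
  omega

end luckBelow

def glue (m : ℕ) {a b : ℕ} (f : Fin a → ℕ) (g : Fin b → ℕ) : Fin (a + b) → ℕ :=
  Fin.append f fun i => g i + m * a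

def unglue (m : ℕ) {a b : ℕ} (p : Fin (a + b) → ℕ) : (Fin a → ℕ) × (Fin b → ℕ) :=
  (fun i => p (Fin.castAdd b i), fun i => p (Fin.natAdd a i) - m * a)

section glue

variable {m a b : ℕ}

lemma luckBelow_glue (f : Fin a → ℕ) (g : Fin b → ℕ) (s : ℕ) :
    luckBelow m (glue m f g) s = luckBelow m f s + luckBelow m g (s - a) := by
  unfold luckBelow
  rw [card_filter, card_filter, card_filter, Fin.sum_univ_add]
  simp only [glue, Fin.append_left, Fin.append_right, Fin.val_castAdd, Fin.val_natAdd]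
  congr 1
  refine sum_congr rfl fun i _ => ?_
  have : m * (a + i) = m * a + m * i := mul_add _ _ _
  by_cases h : (i : ℕ) < s - a ∧ g i = m * i + 1
  · rw [if_pos h, if_pos (by omega)]
  · rw [if_neg h, if_neg (by omega)]

lemma luck_glue (f : Fin a → ℕ) (g : Fin b → ℕ) :
    luck m (glue m f g) = luck m f + luck m g := by
  rw [← luckBelow_of_le le_rfl, luckBelow_glue, luckBelow_of_le (by omega),
    luckBelow_of_le (by omega)]

lemma glue_mem_PK {f : Fin a → ℕ} {g : Fin b → ℕ} (hf : f ∈ PK m a) (hg : g ∈ PK m b) :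
    glue m f g ∈ PK m (a + b) := by
  rw [mem_PK] at *
  refine ⟨Fin.monotone_append hf.1 (fun i j h => Nat.add_le_add_right (hg.1 h) _)
    fun i j => ?_, fun i => ?_⟩
  · have := (hf.2 i).2
    have := (hg.2 j).1
    have := Nat.mul_le_mul_left m i.2.le
    omega
  · induction i using Fin.addCases with
    | left i => simpa [glue] using hf.2 i
    | right i =>
      have := hg.2 i
      have : m * (a + i) = m * a + m * i := mul_add _ _ _
      simp only [glue, Fin.append_right, Fin.val_natAdd]
      omega

@[simp] lemma unglue_glue (f : Fin a → ℕ) (g : Fin b → ℕ) :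
    unglue m (glue m f g) = (f, g) := by
  simp [unglue, glue]

lemma glue_unglue {p : Fin (a + b) → ℕ} (hp : ∀ i, m * a ≤ p (Fin.natAdd a i)) :
    glue m (unglue m p).1 (unglue m p).2 = p := by
  funext x
  induction x using Fin.addCases with
  | left i => simp [glue, unglue]
  | right i => simpa [glue, unglue] using Nat.sub_add_cancel (hp i)

lemma unglue_mem_PK {p : Fin (a + b) → ℕ} (hp : p ∈ PK m (a + b))
    (hpa : ∀ i, m * a + 1 ≤ p (Fin.natAdd a i)) :
    (unglue m p).1 ∈ PK m a ∧ (unglue m p).2 ∈ PK m b := by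
  rw [mem_PK] at hp
  rw [mem_PK, mem_PK]
  refine ⟨⟨hp.1.comp (Fin.strictMono_castAdd b).monotone, fun i => hp.2 (Fin.castAdd b i)⟩,
    ⟨fun i j h => Nat.sub_le_sub_right (hp.1 ((Fin.strictMono_natAdd a).monotone h)) _,
      fun i => ?_⟩⟩
  have := (hp.2 (Fin.natAdd a i)).2
  have := hpa i
  have : m * (a + i) = m * a + m * i := mul_add _ _ _
  simp only [unglue, Fin.val_natAdd] at *
  omega

end glue

lemma Cnt_zero (m n : ℕ) : Cnt m n 0 = if n = 0 then 1 else 0 := by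
  split_ifs with hn
  · subst hn
    rw [Cnt, card_eq_one]
    refine ⟨Fin.elim0, eq_singleton_iff_unique_mem.2 ⟨?_, fun p _ => Subsingleton.elim _ _⟩⟩
    simp only [mem_filter, mem_PK]
    exact ⟨⟨fun i => i.elim0, fun i => i.elim0⟩, by simp [luck]⟩
  · rw [Cnt, card_eq_zero, filter_eq_empty_iff]
    intro p hp hluck
    have := luckBelow_mono (m := m) (p := p) (Nat.one_le_iff_ne_zero.2 hn)
    rw [luckBelow_one hp (by omega), luckBelow_of_le le_rfl, hluck] at this
    omega

lemma le_natAdd_of_luckBelow_lt {m a b : ℕ} {p : Fin (a + b) → ℕ} (hp : p ∈ PK m (a + b))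
    (h : luckBelow m p a < luckBelow m p (a + 1)) (i : Fin b) :
    m * a + 1 ≤ p (Fin.natAdd a i) := by
  obtain ⟨ha, hpa⟩ := exists_lucky_of_luckBelow_lt h
  exact hpa ▸ (mem_PK.1 hp).1 (Fin.le_def.2 (by simp))

lemma card_filter_luckBelow_eq_mul {m a b j k : ℕ} (hk : k ≠ 0) :
    #{p ∈ PK m (a + b) |
        luck m p = j + k ∧ luckBelow m p a = j ∧ luckBelow m p (a + 1) = j + 1} =
      Cnt m a j * Cnt m b k := by
  rw [Cnt, Cnt, ← card_product]
  symm
  refine card_nbij' (fun x => glue m x.1 x.2) (unglue m) ?_ ?_ (fun x _ => unglue_glue _ _) ?_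
  · rintro ⟨f, g⟩ hfg
    simp only [mem_coe, mem_product, mem_filter] at hfg ⊢
    obtain ⟨⟨hf, rfl⟩, hg, rfl⟩ := hfg
    have hb : 0 < b := Nat.pos_of_ne_zero fun hb => hk (by subst hb; simp [luck])
    refine ⟨glue_mem_PK hf hg, luck_glue f g, ?_, ?_⟩
    · rw [luckBelow_glue, Nat.sub_self, luckBelow_zero, luckBelow_of_le le_rfl, add_zero]
    · rw [luckBelow_glue, Nat.add_sub_cancel_left, luckBelow_one hg hb,
        luckBelow_of_le (Nat.le_succ a)]
  · intro p hp
    simp only [mem_coe, mem_product, mem_filter] at hp ⊢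
    obtain ⟨hp, hluck, hbelow, hbelow'⟩ := hp
    have hge := le_natAdd_of_luckBelow_lt hp (by omega)
    have hsplit := glue_unglue (m := m) (p := p) fun i => (hge i).trans' (Nat.le_succ _)
    obtain ⟨hf, hg⟩ := unglue_mem_PK hp hge
    rw [← hsplit, luckBelow_glue, Nat.sub_self, luckBelow_zero, luckBelow_of_le le_rfl,
      add_zero] at hbelow
    rw [← hsplit, luck_glue, hbelow] at hluck
    exact ⟨⟨hf, hbelow⟩, hg, by omega⟩
  · intro p hp
    simp only [mem_coe, mem_filter] at hp
    obtain ⟨hp, -, hbelow, hbelow'⟩ := hp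
    exact glue_unglue fun i => (le_natAdd_of_luckBelow_lt hp (by omega) i).trans' (Nat.le_succ _)

lemma Cnt_add (m n j k : ℕ) :
    Cnt m n (j + k) = ∑ ab ∈ antidiagonal n, Cnt m ab.1 j * Cnt m ab.2 k := by
  rcases Nat.eq_zero_or_pos k with rfl | hk
  · rw [sum_eq_single (n, 0) (fun ab hab hne => ?_) (by simp)]
    · simp [Cnt_zero]
    · rw [HasAntidiagonal.mem_antidiagonal] at hab
      rw [Cnt_zero, if_neg fun h => hne (Prod.ext (by omega) h), mul_zero]
  let fiber (ab : ℕ × ℕ) : Finset (Fin n → ℕ) :=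
    {p ∈ PK m n |
      luck m p = j + k ∧ luckBelow m p ab.1 = j ∧ luckBelow m p (ab.1 + 1) = j + 1}
  have hcover : {p ∈ PK m n | luck m p = j + k} = (antidiagonal n).biUnion fiber := by
    ext p
    simp only [mem_filter, mem_biUnion, HasAntidiagonal.mem_antidiagonal, fiber]
    refine ⟨fun ⟨hp, hluck⟩ => ?_, fun ⟨_, _, hp, hluck, _⟩ => ⟨hp, hluck⟩⟩
    have hj : j < luckBelow m p n := by rw [luckBelow_of_le le_rfl]; omega
    obtain ⟨r, hr, hfiber⟩ :=
      exists_eq_and_eq_add_one_of_lt luckBelow_zero luckBelow_succ_le hj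
    exact ⟨(r, n - r), by simp only; omega, hp, hluck, hfiber⟩
  have hdisj : (antidiagonal n : Set (ℕ × ℕ)).PairwiseDisjoint fiber := by
    intro ab hab ab' hab' hne
    simp only [mem_coe, HasAntidiagonal.mem_antidiagonal] at hab hab'
    have hne' : ab.1 ≠ ab'.1 := fun h => hne (Prod.ext h (by omega))
    refine disjoint_filter.2 fun p _ ⟨_, h, h'⟩ ⟨_, g, g'⟩ => hne'.lt_or_gt.elim ?_ ?_
    · exact fun (hlt : ab.1 + 1 ≤ ab'.1) =>
        absurd (luckBelow_mono (m := m) (p := p) hlt) (by omega)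
    · exact fun (hlt : ab'.1 + 1 ≤ ab.1) =>
        absurd (luckBelow_mono (m := m) (p := p) hlt) (by omega)
  rw [Cnt, hcover, card_biUnion hdisj]
  refine sum_congr rfl fun ⟨a, b⟩ hab => ?_
  rw [HasAntidiagonal.mem_antidiagonal] at hab
  subst hab
  exact card_filter_luckBelow_eq_mul hk.ne'

lemma Finset.Nat.sum_antidiagonalTuple_succ {M : Type*} [AddCommMonoid M] (t n : ℕ)
    (f : (Fin (t + 1) → ℕ) → M) :
    ∑ α ∈ Nat.antidiagonalTuple (t + 1) n, f α =
      ∑ ab ∈ antidiagonal n, ∑ α ∈ Nat.antidiagonalTuple t ab.2, f (Fin.cons ab.1 α) := by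
  change _ = ((List.Nat.antidiagonal n : Multiset (ℕ × ℕ)).map _).sum
  simp [Finset.sum, Nat.antidiagonalTuple, Multiset.Nat.antidiagonalTuple,
    List.Nat.antidiagonalTuple, List.flatMap, List.sum_flatten, Function.comp_def]

lemma sum_antidiagonalTuple_prod_Cnt (m t n : ℕ) (β : Fin t → ℕ) :
    ∑ α ∈ Nat.antidiagonalTuple t n, ∏ i, Cnt m (α i) (β i) = Cnt m n (∑ i, β i) := by
  induction t generalizing n with
  | zero => cases n <;> simp [Cnt_zero]
  | succ t ih =>
    simp only [Nat.sum_antidiagonalTuple_succ, Fin.prod_univ_succ, Fin.cons_zero, Fin.cons_succ,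
      ← mul_sum, ih, Fin.sum_univ_succ, Cnt_add]

lemma le_of_mem_antidiagonalTuple {t n : ℕ} {α : Fin t → ℕ}
    (h : α ∈ Nat.antidiagonalTuple t n) (i : Fin t) : α i ≤ n :=
  Nat.mem_antidiagonalTuple.1 h ▸ single_le_sum (fun _ _ => Nat.zero_le _) (mem_univ i)

lemma sum_piFinset_range_eq_sum_antidiagonalTuple {M : Type*} [AddCommMonoid M] {t n : ℕ}
    (g : (Fin t → ℕ) → M) (hg : ∀ β, n < ∑ i, β i → g β = 0) :
    ∑ β ∈ Fintype.piFinset fun _ : Fin t => range (n + 1), g β =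
      ∑ k ∈ range (n + 1), ∑ β ∈ Nat.antidiagonalTuple t k, g β := by
  rw [← sum_filter_of_ne (p := fun β => ∑ i, β i ≤ n) fun β _ hβ => by
    by_contra h; exact hβ (hg β (by omega))]
  rw [← sum_fiberwise_of_maps_to (g := fun β => ∑ i, β i) (t := range (n + 1))
    fun β hβ => by simp only [mem_filter] at hβ; exact mem_range.2 (by omega)]
  refine sum_congr rfl fun k hk => sum_congr ?_ fun _ _ => rfl
  ext β
  simp only [mem_filter, Fintype.mem_piFinset, mem_range, Nat.mem_antidiagonalTuple] at hk ⊢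
  refine ⟨fun h => h.2, fun h => ⟨⟨fun i => ?_, by omega⟩, h⟩⟩
  have := le_of_mem_antidiagonalTuple (Nat.mem_antidiagonalTuple.2 h) i
  omega

lemma aeval_Rpoly_s14 {R : Type*} [CommRing R] (m : ℕ) {a N : ℕ} (h : a ≤ N) (x : R) :
    Polynomial.aeval x (Rpoly m a) = ∑ k ∈ range (N + 1), (Cnt m a k : R) * x ^ k := by
  rw [Rpoly, map_sum]
  refine sum_subset (range_subset_range.2 (by omega)) (fun k _ hk => ?_) |>.trans
    (sum_congr rfl fun k _ => by simp)
  rw [mem_range, not_lt] at hk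
  simp [Cnt_eq_zero_of_lt (show a < k by omega)]

theorem stmt14_general (m : ℕ) (t : ℕ) (n : ℕ) :
    ∑ α ∈ Finset.Nat.antidiagonalTuple t n,
        ∏ i : Fin t, Polynomial.aeval (MvPolynomial.X i : MvPolynomial (Fin t) ℤ) (Rpoly m (α i)) =
      ∑ k ∈ Finset.range (n + 1), (Cnt m n k : MvPolynomial (Fin t) ℤ) * hfull t k := by
  calc _ = ∑ α ∈ Nat.antidiagonalTuple t n, ∏ i : Fin t, ∑ k ∈ range (n + 1),
          (Cnt m (α i) k : MvPolynomial (Fin t) ℤ) * MvPolynomial.X i ^ k :=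
        sum_congr rfl fun α hα => prod_congr rfl fun i _ =>
          aeval_Rpoly_s14 m (le_of_mem_antidiagonalTuple hα i) _
    _ = ∑ β ∈ Fintype.piFinset fun _ : Fin t => range (n + 1),
          (Cnt m n (∑ i, β i) : MvPolynomial (Fin t) ℤ) * ∏ i, MvPolynomial.X i ^ β i := by
        simp only [prod_univ_sum, prod_mul_distrib]
        rw [sum_comm]
        simp only [← sum_mul, ← Nat.cast_prod, ← Nat.cast_sum, sum_antidiagonalTuple_prod_Cnt]
    _ = _ := by
        rw [sum_piFinset_range_eq_sum_antidiagonalTuple _ fun β hβ => by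
          rw [Cnt_eq_zero_of_lt hβ, Nat.cast_zero, zero_mul]]
        refine sum_congr rfl fun k _ => ?_
        rw [hfull, mul_sum]
        exact sum_congr rfl fun β hβ => by rw [Nat.mem_antidiagonalTuple.1 hβ]

theorem stmt14 (m : ℕ) (hm : 1 ≤ m) (t : ℕ) (ht : 1 ≤ t) (n : ℕ) :
    ∑ α ∈ Finset.Nat.antidiagonalTuple t n,
        ∏ i : Fin t, Polynomial.aeval (MvPolynomial.X i : MvPolynomial (Fin t) ℤ) (Rpoly m (α i)) =
      ∑ k ∈ Finset.range (n + 1), (Cnt m n k : MvPolynomial (Fin t) ℤ) * hfull t k :=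
  stmt14_general m t n

end
end
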